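/- arXiv:2312.16370 — 2 statements merged into one kernel-verified Lean document; each statement's English description precedes it below -/
import Mathlib

section
/- Let ε > 0, let x and y be independent random variables each distributed as Lap(1/ε), and for real numbers α, β, γ define P(α, β, γ) = P[x < α ∧ y < β ∧ x + y < γ]. If γ < α + β, then for every τ ≥ 0, P(α+τ, β+τ, γ) ≤ e^{3τε} · P(α, β, γ). -/
/-!
Translating by `(τ, τ)` maps the event `{x < α + τ, y < β + τ, x + y < γ}` into
`{x < α, y < β, x + y < γ}` (the constraint on the sum only gets stronger), while the Laplace
density `e^{-ε|u|}` changes by a factor of at most `e^{τε}` under a shift by `τ`. Lebesgue measure on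
the plane being translation invariant, the probability grows by at most `e^{2τε} ≤ e^{3τε}`.
-/

open MeasureTheory ProbabilityTheory
open scoped ENNReal

/-- The Laplace distribution `Lap(b)` on `ℝ`, with density `(1/(2b))·e^{−|x|/b}`. -/
noncomputable def lapMeasure (b : ℝ) : Measure ℝ :=
  volume.withDensity fun x => ENNReal.ofReal ((1 / (2 * b)) * Real.exp (-|x| / b))

theorem withDensity_le_mul_of_add_mem {G : Type*} [MeasurableSpace G] [AddGroup G]
    [MeasurableAdd G] (μ : Measure G) [μ.IsAddRightInvariant] {f : G → ℝ≥0∞}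
    (hf : Measurable f) {s t : Set G} (hs : MeasurableSet s) (ht : MeasurableSet t) (v : G)
    (c : ℝ≥0∞) (h : ∀ p, p + v ∈ s → p ∈ t ∧ f (p + v) ≤ c * f p) :
    μ.withDensity f s ≤ c * μ.withDensity f t := by
  have hshift : ∀ p, s.indicator f (p + v) ≤ c * t.indicator f p := by
    intro p
    by_cases hp : p + v ∈ s
    · obtain ⟨hp', hle⟩ := h p hp
      rwa [Set.indicator_of_mem hp, Set.indicator_of_mem hp']
    · rw [Set.indicator_of_notMem hp]
      exact zero_le
  rw [withDensity_apply _ hs, withDensity_apply _ ht, ← lintegral_indicator hs,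
    ← lintegral_indicator ht, ← lintegral_add_right_eq_self _ v,
    ← lintegral_const_mul c (hf.indicator ht)]
  exact lintegral_mono hshift

noncomputable def lapDensity (b u : ℝ) : ℝ≥0∞ :=
  ENNReal.ofReal (1 / (2 * b) * Real.exp (-|u| / b))

theorem lapMeasure_eq_withDensity (b : ℝ) : lapMeasure b = volume.withDensity (lapDensity b) :=
  rfl

@[fun_prop]
theorem measurable_lapDensity (b : ℝ) : Measurable (lapDensity b) := by
  unfold lapDensity
  fun_prop

theorem lapDensity_add_le {b : ℝ} (hb : 0 ≤ b) (u t : ℝ) :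
    lapDensity b (u + t) ≤ ENNReal.ofReal (Real.exp (|t| / b)) * lapDensity b u := by
  have hexp : -|u + t| / b ≤ |t| / b + -|u| / b := by
    rw [← add_div]
    gcongr
    have htri := abs_add_le (u + t) (-t)
    rw [add_neg_cancel_right, abs_neg] at htri
    linarith
  rw [lapDensity, lapDensity, ← ENNReal.ofReal_mul (Real.exp_nonneg _), mul_left_comm,
    ← Real.exp_add]
  gcongr

/-- `P(α, β, γ)` is the joint law of `(x, y)` evaluated on `cornerRegion α β γ`. -/
def cornerRegion (α β γ : ℝ) : Set (ℝ × ℝ) :=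
  {p | p.1 < α ∧ p.2 < β ∧ p.1 + p.2 < γ}

theorem measurableSet_cornerRegion (α β γ : ℝ) : MeasurableSet (cornerRegion α β γ) := by
  unfold cornerRegion
  measurability

theorem lapMeasure_prod_cornerRegion_add_le {b : ℝ} (hb : 0 ≤ b) (α β γ : ℝ) {τ : ℝ}
    (hτ : 0 ≤ τ) :
    ((lapMeasure b).prod (lapMeasure b)) (cornerRegion (α + τ) (β + τ) γ) ≤
      ENNReal.ofReal (Real.exp (2 * τ / b)) *
        ((lapMeasure b).prod (lapMeasure b)) (cornerRegion α β γ) := by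
  rw [lapMeasure_eq_withDensity, prod_withDensity (measurable_lapDensity b)
    (measurable_lapDensity b)]
  refine withDensity_le_mul_of_add_mem _ (by fun_prop) (measurableSet_cornerRegion _ _ γ)
    (measurableSet_cornerRegion α β γ) (τ, τ) _ ?_
  rintro ⟨u, w⟩ ⟨hu, hw, huw⟩
  simp only [Prod.mk_add_mk] at hu hw huw ⊢
  refine ⟨⟨by linarith, by linarith, by linarith⟩, ?_⟩
  calc lapDensity b (u + τ) * lapDensity b (w + τ)
      ≤ ENNReal.ofReal (Real.exp (|τ| / b)) * lapDensity b u *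
          (ENNReal.ofReal (Real.exp (|τ| / b)) * lapDensity b w) :=
        mul_le_mul' (lapDensity_add_le hb u τ) (lapDensity_add_le hb w τ)
    _ = ENNReal.ofReal (Real.exp (2 * τ / b)) * (lapDensity b u * lapDensity b w) := by
        rw [abs_of_nonneg hτ, two_mul, add_div, Real.exp_add,
          ENNReal.ofReal_mul (Real.exp_nonneg _)]
        ring

theorem laplace_shift_small_gamma_general
    (Ω : Type) [MeasurableSpace Ω] (μ : Measure Ω) [IsProbabilityMeasure μ]
    (ε : ℝ) (hε : 0 < ε) (x y : Ω → ℝ) (hx : Measurable x) (hy : Measurable y)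
    (hxd : μ.map x = lapMeasure (1 / ε)) (hyd : μ.map y = lapMeasure (1 / ε))
    (hind : IndepFun x y μ) (α β γ : ℝ) (τ : ℝ) (hτ : 0 ≤ τ) :
    μ {ω | x ω < α + τ ∧ y ω < β + τ ∧ x ω + y ω < γ} ≤
      ENNReal.ofReal (Real.exp (3 * τ * ε)) *
        μ {ω | x ω < α ∧ y ω < β ∧ x ω + y ω < γ} := by
  have hlaw : μ.map (fun ω => (x ω, y ω)) = (lapMeasure (1 / ε)).prod (lapMeasure (1 / ε)) := by
    rw [hind.map_prod_eq_prod_map_map hx.aemeasurable hy.aemeasurable, hxd, hyd]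
  have hμ : ∀ a b, μ {ω | x ω < a ∧ y ω < b ∧ x ω + y ω < γ} =
      ((lapMeasure (1 / ε)).prod (lapMeasure (1 / ε))) (cornerRegion a b γ) := fun a b => by
    rw [← hlaw, Measure.map_apply (hx.prodMk hy) (measurableSet_cornerRegion a b γ)]
    rfl
  rw [hμ, hμ]
  calc _ ≤ ENNReal.ofReal (Real.exp (2 * τ / (1 / ε))) * _ :=
        lapMeasure_prod_cornerRegion_add_le (by positivity) α β γ hτ
    _ ≤ _ := by
        gcongr
        rw [div_div_eq_mul_div, div_one]
        nlinarith [mul_nonneg hτ hε.le]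

/-- For independent `x, y ∼ Lap(1/ε)` and
`P(α,β,γ) = P[x < α ∧ y < β ∧ x + y < γ]`, if `γ < α + β` then for every `τ ≥ 0`,
`P(α+τ, β+τ, γ) ≤ e^{3τε}·P(α, β, γ)`. -/
theorem laplace_shift_small_gamma
    (Ω : Type) [MeasurableSpace Ω] (μ : Measure Ω) [IsProbabilityMeasure μ]
    (ε : ℝ) (hε : 0 < ε) (x y : Ω → ℝ) (hx : Measurable x) (hy : Measurable y)
    (hxd : μ.map x = lapMeasure (1 / ε)) (hyd : μ.map y = lapMeasure (1 / ε))
    (hind : IndepFun x y μ) (α β γ : ℝ) (hγ : γ < α + β) (τ : ℝ) (hτ : 0 ≤ τ) :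
    μ {ω | x ω < α + τ ∧ y ω < β + τ ∧ x ω + y ω < γ} ≤
      ENNReal.ofReal (Real.exp (3 * τ * ε)) *
        μ {ω | x ω < α ∧ y ω < β ∧ x ω + y ω < γ} :=
  laplace_shift_small_gamma_general Ω μ ε hε x y hx hy hxd hyd hind α β γ τ hτ
end

section
/- Let ε > 0, let x and y be independent random variables each distributed as Lap(1/ε), let f and F denote the density and cumulative distribution function of Lap(1/ε), and for real numbers α, β, γ define P(α, β, γ) = P[x < α ∧ y < β ∧ x + y < γ]. If γ < α + β, then for every τ ≥ 0, P(α, β, γ) ≥ F(α)·F(γ − α − 2τ) + e^{−2τε} · ∫_{γ−α−2τ}^{β} F(γ − y)·f(y) dy. -/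
open MeasureTheory ProbabilityTheory

/-- The density of the Laplace distribution `Lap(b)`. -/
noncomputable def lapPDF (b : ℝ) (x : ℝ) : ℝ := (1 / (2 * b)) * Real.exp (-|x| / b)

/-- The cumulative distribution function of the Laplace distribution `Lap(b)`. -/
noncomputable def lapCDF (b : ℝ) (x : ℝ) : ℝ :=
  if x ≤ 0 then (1 / 2) * Real.exp (x / b) else 1 - (1 / 2) * Real.exp (-x / b)

/-!
Independence makes `(x, y)` distributed as `Lap(b) ⊗ Lap(b)` with `b = 1/ε`, so slicing along `y`
gives `P(α, β, γ) = ∫_{v < β} F(min(α, γ - v)) dLap(b)(v)`. Split the range of `v` at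
`c = γ - α - 2τ < β`. For `v ≤ c` the minimum is `α`, which contributes `F(α)·F(c)`.
For `c < v < β` we have `γ - v < α + 2τ`, and the tail estimate `F(s + k) ≤ e^{k/b}·F(s)`
(`k ≥ 0`) gives `F(min(α, γ - v)) ≥ e^{-2τε}·F(γ - v)`, which integrates to the second term.
-/

open Real Set Filter Topology

lemma setLIntegral_withDensity_ofReal_Ioo {f g : ℝ → ℝ} (hf : Continuous f)
    (hf0 : ∀ x, 0 ≤ f x) (hg : Continuous g) (hg0 : ∀ x, 0 ≤ g x) {a c : ℝ}
    (hac : a ≤ c) :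
    ∫⁻ x in Ioo a c, ENNReal.ofReal (g x) ∂volume.withDensity (fun x => ENNReal.ofReal (f x))
      = ENNReal.ofReal (∫ x in a..c, g x * f x) := by
  rw [setLIntegral_withDensity_eq_setLIntegral_mul _ hf.measurable.ennreal_ofReal
      hg.measurable.ennreal_ofReal measurableSet_Ioo,
    intervalIntegral.integral_of_le hac, integral_Ioc_eq_integral_Ioo,
    ofReal_integral_eq_lintegral_ofReal (f := fun x => g x * f x)
      ((hg.mul hf).integrableOn_Icc.mono_set Ioo_subset_Icc_self)
      (ae_of_all _ fun x => mul_nonneg (hg0 x) (hf0 x))]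
  refine lintegral_congr fun x => ?_
  rw [Pi.mul_apply, ← ENNReal.ofReal_mul (hf0 x), mul_comm]

lemma ProbabilityTheory.IndepFun.measure_preimage_prodMk {Ω E F : Type*} [MeasurableSpace Ω]
    [MeasurableSpace E] [MeasurableSpace F] {μ : Measure Ω} [IsFiniteMeasure μ] {x : Ω → E}
    {y : Ω → F} (hind : IndepFun x y μ) (hx : Measurable x) (hy : Measurable y)
    {s : Set (E × F)} (hs : MeasurableSet s) :
    μ ((fun ω => (x ω, y ω)) ⁻¹' s) = (μ.map x).prod (μ.map y) s := by
  rw [← (indepFun_iff_map_prod_eq_prod_map_map hx.aemeasurable hy.aemeasurable).1 hind,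
    Measure.map_apply (hx.prodMk hy) hs]

lemma measurableSet_setOf_lt_lt_add_lt (α β γ : ℝ) :
    MeasurableSet {p : ℝ × ℝ | p.1 < α ∧ p.2 < β ∧ p.1 + p.2 < γ} :=
  (measurableSet_lt measurable_fst measurable_const).inter
    ((measurableSet_lt measurable_snd measurable_const).inter
      (measurableSet_lt (measurable_fst.add measurable_snd) measurable_const))

lemma MeasureTheory.Measure.prod_setOf_lt_lt_add_lt (ν₁ ν₂ : Measure ℝ) [SFinite ν₁]
    [SFinite ν₂] (α β γ : ℝ) :
    ν₁.prod ν₂ {p | p.1 < α ∧ p.2 < β ∧ p.1 + p.2 < γ} =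
      ∫⁻ v in Iio β, ν₁ (Iio (min α (γ - v))) ∂ν₂ := by
  rw [Measure.prod_apply_symm (measurableSet_setOf_lt_lt_add_lt α β γ),
    ← lintegral_indicator measurableSet_Iio]
  refine lintegral_congr fun v => ?_
  by_cases hv : v < β
  · rw [indicator_of_mem (mem_Iio.2 hv)]
    congr 1
    ext u
    simp [hv, lt_sub_iff_add_lt]
  · rw [indicator_of_notMem (notMem_Iio.2 (not_lt.1 hv))]
    simp [hv]

section Laplace

variable {b : ℝ}

lemma lapPDF_nonneg (hb : 0 < b) (x : ℝ) : 0 ≤ lapPDF b x := by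
  unfold lapPDF; positivity

@[fun_prop]
lemma continuous_lapPDF (b : ℝ) : Continuous (lapPDF b) := by
  unfold lapPDF; fun_prop

lemma integrable_lapPDF (hb : 0 < b) : Integrable (lapPDF b) := by
  have hIic : IntegrableOn (lapPDF b) (Iic 0) :=
    IntegrableOn.congr_fun ((integrableOn_exp_mul_Iic (inv_pos.2 hb) 0).const_mul (1 / (2 * b)))
      (fun x (hx : x ≤ 0) => by simp [lapPDF, abs_of_nonpos hx, div_eq_inv_mul])
      measurableSet_Iic
  have hIoi : IntegrableOn (lapPDF b) (Ioi 0) :=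
    IntegrableOn.congr_fun
      ((integrableOn_exp_mul_Ioi (neg_lt_zero.2 (inv_pos.2 hb)) 0).const_mul (1 / (2 * b)))
      (fun x (hx : 0 < x) => by simp [lapPDF, abs_of_pos hx, div_eq_inv_mul])
      measurableSet_Ioi
  simpa using hIic.union hIoi

lemma lapMeasure_eq_withDensity_s13 (b : ℝ) :
    lapMeasure b = volume.withDensity fun x => ENNReal.ofReal (lapPDF b x) := rfl

instance (b : ℝ) : SFinite (lapMeasure b) := by
  rw [lapMeasure_eq_withDensity_s13]; infer_instance

lemma lapMeasure_apply (hb : 0 < b) {s : Set ℝ} (hs : MeasurableSet s) :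
    lapMeasure b s = ENNReal.ofReal (∫ x in s, lapPDF b x) := by
  rw [lapMeasure_eq_withDensity_s13, withDensity_apply _ hs, ofReal_integral_eq_lintegral_ofReal
    (integrable_lapPDF hb).integrableOn (ae_of_all _ (lapPDF_nonneg hb))]

lemma hasDerivAt_lapCDF (b x : ℝ) : HasDerivAt (lapCDF b) (lapPDF b x) x := by
  have hL (t : ℝ) : HasDerivAt (fun t => 1 / 2 * exp (t / b)) (1 / (2 * b) * exp (t / b)) t := by
    refine (((hasDerivAt_id' t).div_const b).exp.const_mul (1 / 2)).congr_deriv ?_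
    ring
  have hR (t : ℝ) :
      HasDerivAt (fun t => 1 - 1 / 2 * exp (-t / b)) (1 / (2 * b) * exp (-t / b)) t := by
    refine ((((hasDerivAt_neg t).div_const b).exp.const_mul (1 / 2)).const_sub 1).congr_deriv ?_
    ring
  rcases lt_trichotomy x 0 with hx | rfl | hx
  · rw [lapPDF, abs_of_neg hx, neg_neg]
    refine (hL x).congr_of_eventuallyEq ?_
    filter_upwards [Iio_mem_nhds hx] with t ht using if_pos (le_of_lt ht)
  · have hIic : HasDerivWithinAt (lapCDF b) (lapPDF b 0) (Iic 0) 0 := by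
      refine ((hL 0).hasDerivWithinAt.congr (f₁ := lapCDF b) (fun t ht => if_pos ht)
        (if_pos le_rfl)).congr_deriv ?_
      simp [lapPDF]
    have hIci : HasDerivWithinAt (lapCDF b) (lapPDF b 0) (Ici 0) 0 := by
      refine ((hR 0).hasDerivWithinAt.congr (f₁ := lapCDF b) (fun t ht => ?_)
        (by norm_num [lapCDF])).congr_deriv ?_
      · rcases (mem_Ici.1 ht).eq_or_lt with rfl | ht
        · norm_num [lapCDF]
        · exact if_neg (not_le.2 ht)
      · simp [lapPDF]
    simpa using hIic.union hIci
  · rw [lapPDF, abs_of_pos hx]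
    refine (hR x).congr_of_eventuallyEq ?_
    filter_upwards [Ioi_mem_nhds hx] with t ht using if_neg (not_le.2 ht)

@[fun_prop]
lemma continuous_lapCDF (b : ℝ) : Continuous (lapCDF b) :=
  continuous_iff_continuousAt.2 fun x => (hasDerivAt_lapCDF b x).continuousAt

lemma tendsto_lapCDF_atBot (hb : 0 < b) : Tendsto (lapCDF b) atBot (𝓝 0) := by
  have h : Tendsto (fun t => 1 / 2 * exp (t / b)) atBot (𝓝 (1 / 2 * 0)) :=
    (tendsto_exp_atBot.comp (tendsto_id.atBot_div_const hb)).const_mul _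
  rw [mul_zero] at h
  refine h.congr' ?_
  filter_upwards [Iic_mem_atBot 0] with t ht using (if_pos ht).symm

lemma integral_lapPDF_Iic (hb : 0 < b) (t : ℝ) : ∫ x in Iic t, lapPDF b x = lapCDF b t := by
  rw [integral_Iic_of_hasDerivAt_of_tendsto (continuous_lapCDF b).continuousWithinAt
    (fun x _ => hasDerivAt_lapCDF b x) (integrable_lapPDF hb).integrableOn
    (tendsto_lapCDF_atBot hb), sub_zero]

lemma lapMeasure_Iic (hb : 0 < b) (t : ℝ) :
    lapMeasure b (Iic t) = ENNReal.ofReal (lapCDF b t) := by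
  rw [lapMeasure_apply hb measurableSet_Iic, integral_lapPDF_Iic hb]

lemma lapMeasure_Iio (hb : 0 < b) (t : ℝ) :
    lapMeasure b (Iio t) = ENNReal.ofReal (lapCDF b t) := by
  rw [lapMeasure_apply hb measurableSet_Iio, ← integral_Iic_eq_integral_Iio,
    integral_lapPDF_Iic hb]

lemma lapCDF_nonneg (hb : 0 < b) (x : ℝ) : 0 ≤ lapCDF b x :=
  integral_lapPDF_Iic hb x ▸ setIntegral_nonneg measurableSet_Iic fun y _ => lapPDF_nonneg hb y

lemma lapCDF_mono (hb : 0 < b) : Monotone (lapCDF b) := fun s t hst => by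
  simp only [← integral_lapPDF_Iic hb]
  exact setIntegral_mono_set (integrable_lapPDF hb).integrableOn
    (ae_of_all _ (lapPDF_nonneg hb)) (Iic_subset_Iic.2 hst).eventuallyLE

lemma lapCDF_add_le_exp_mul (hb : 0 < b) {k : ℝ} (hk : 0 ≤ k) (s : ℝ) :
    lapCDF b (s + k) ≤ exp (k / b) * lapCDF b s := by
  have hK : 1 ≤ exp (k / b) := one_le_exp (div_nonneg hk hb.le)
  unfold lapCDF
  split_ifs with hsk hs hs
  · rw [add_div, exp_add]; linarith
  · linarith
  · -- `1 - e^{-u}/2 ≤ e^{u}/2` is `1 ≤ cosh u`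
    have hcosh := one_le_cosh ((s + k) / b)
    have hprod : exp (k / b) * exp (s / b) = exp ((s + k) / b) := by rw [← exp_add]; ring_nf
    rw [cosh_eq] at hcosh
    rw [neg_div]
    linarith
  · push Not at hsk hs
    have hKB : exp (k / b) * exp (-(s + k) / b) = exp (-s / b) := by
      rw [← exp_add]; ring_nf
    have hA : exp (-s / b) ≤ 1 :=
      exp_le_one_iff.2 (div_nonpos_of_nonpos_of_nonneg (by linarith) hb.le)
    have hBA : exp (-(s + k) / b) ≤ exp (-s / b) := exp_le_exp.2 (by gcongr; linarith)
    nlinarith [mul_nonneg (sub_nonneg.2 hK)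
      (by linarith : (0 : ℝ) ≤ 2 - exp (-s / b) - exp (-(s + k) / b))]

lemma exp_neg_div_mul_lapCDF_le_lapCDF_min (hb : 0 < b) {k : ℝ} (hk : 0 ≤ k) {a s : ℝ}
    (hs : s ≤ a + k) : exp (-k / b) * lapCDF b s ≤ lapCDF b (min a s) := by
  rcases le_total s a with hsa | has
  · rw [min_eq_right hsa]
    exact mul_le_of_le_one_left (lapCDF_nonneg hb s)
      (exp_le_one_iff.2 (div_nonpos_of_nonpos_of_nonneg (neg_nonpos.2 hk) hb.le))
  · rw [min_eq_left has]
    calc exp (-k / b) * lapCDF b s ≤ exp (-k / b) * (exp (k / b) * lapCDF b a) := by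
          gcongr
          exact (lapCDF_mono hb hs).trans (lapCDF_add_le_exp_mul hb hk a)
      _ = lapCDF b a := by
          rw [← mul_assoc, ← exp_add, neg_div, neg_add_cancel, exp_zero, one_mul]

lemma setLIntegral_Iic_lapCDF_min (hb : 0 < b) {a c γ : ℝ} (hc : c ≤ γ - a) :
    ∫⁻ v in Iic c, ENNReal.ofReal (lapCDF b (min a (γ - v))) ∂lapMeasure b =
      ENNReal.ofReal (lapCDF b a * lapCDF b c) := by
  rw [setLIntegral_congr_fun measurableSet_Iic fun v (hv : v ≤ c) => by
      rw [min_eq_left (by linarith)],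
    setLIntegral_const, lapMeasure_Iic hb, ENNReal.ofReal_mul (lapCDF_nonneg hb a)]

lemma ofReal_exp_mul_integral_le_setLIntegral_Ioo_lapCDF_min (hb : 0 < b) {k : ℝ}
    (hk : 0 ≤ k) {a β γ : ℝ} (hβ : γ - a - k ≤ β) :
    ENNReal.ofReal (exp (-k / b) * ∫ z in (γ - a - k)..β, lapCDF b (γ - z) * lapPDF b z) ≤
      ∫⁻ v in Ioo (γ - a - k) β, ENNReal.ofReal (lapCDF b (min a (γ - v))) ∂lapMeasure b := by
  simp_rw [← intervalIntegral.integral_const_mul, ← mul_assoc]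
  rw [lapMeasure_eq_withDensity_s13, ← setLIntegral_withDensity_ofReal_Ioo (continuous_lapPDF b)
    (lapPDF_nonneg hb) (by fun_prop) (fun z => mul_nonneg (exp_pos _).le (lapCDF_nonneg hb _)) hβ]
  exact setLIntegral_mono' measurableSet_Ioo fun v hv => ENNReal.ofReal_le_ofReal
    (exp_neg_div_mul_lapCDF_le_lapCDF_min hb hk (by linarith [hv.1]))

end Laplace

/-- For independent `x, y ∼ Lap(1/ε)` and
`P(α,β,γ) = P[x < α ∧ y < β ∧ x + y < γ]`, if `γ < α + β` then for every `τ ≥ 0`,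
`P(α, β, γ) ≥ F(α)·F(γ − α − 2τ) + e^{−2τε}·∫_{γ−α−2τ}^{β} F(γ − y)·f(y) dy`. -/
theorem laplace_prob_lower_bound
    (Ω : Type) [MeasurableSpace Ω] (μ : Measure Ω) [IsProbabilityMeasure μ]
    (ε : ℝ) (hε : 0 < ε) (x y : Ω → ℝ) (hx : Measurable x) (hy : Measurable y)
    (hxd : μ.map x = lapMeasure (1 / ε)) (hyd : μ.map y = lapMeasure (1 / ε))
    (hind : IndepFun x y μ) (α β γ : ℝ) (hγ : γ < α + β) (τ : ℝ) (hτ : 0 ≤ τ) :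
    lapCDF (1 / ε) α * lapCDF (1 / ε) (γ - α - 2 * τ) +
        Real.exp (-(2 * τ * ε)) *
          ∫ z in (γ - α - 2 * τ)..β, lapCDF (1 / ε) (γ - z) * lapPDF (1 / ε) z ≤
      (μ {ω | x ω < α ∧ y ω < β ∧ x ω + y ω < γ}).toReal := by
  have hb : 0 < 1 / ε := by positivity
  have hcβ : γ - α - 2 * τ < β := by linarith
  have hexp : -(2 * τ * ε) = -(2 * τ) / (1 / ε) := by field_simp
  have hintegral :
      0 ≤ ∫ z in (γ - α - 2 * τ)..β, lapCDF (1 / ε) (γ - z) * lapPDF (1 / ε) z :=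
    intervalIntegral.integral_nonneg hcβ.le fun z _ =>
      mul_nonneg (lapCDF_nonneg hb _) (lapPDF_nonneg hb z)
  have hlaw : μ {ω | x ω < α ∧ y ω < β ∧ x ω + y ω < γ} = (lapMeasure (1 / ε)).prod
      (lapMeasure (1 / ε)) {p | p.1 < α ∧ p.2 < β ∧ p.1 + p.2 < γ} := by
    have h := hind.measure_preimage_prodMk hx hy (measurableSet_setOf_lt_lt_add_lt α β γ)
    rwa [hxd, hyd] at h
  rw [← ENNReal.ofReal_le_iff_le_toReal (measure_ne_top μ _), hlaw,
    Measure.prod_setOf_lt_lt_add_lt, ← Iic_union_Ioo_eq_Iio hcβ,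
    lintegral_union measurableSet_Ioo ((Iic_disjoint_Ioi le_rfl).mono_right Ioo_subset_Ioi_self),
    ENNReal.ofReal_add (mul_nonneg (lapCDF_nonneg hb _) (lapCDF_nonneg hb _))
      (mul_nonneg (exp_pos _).le hintegral), hexp]
  simp_rw [lapMeasure_Iio hb]
  exact add_le_add (setLIntegral_Iic_lapCDF_min hb (by linarith)).ge
    (ofReal_exp_mul_integral_le_setLIntegral_Ioo_lapCDF_min hb (by positivity) hcβ.le)
end
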